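/- arXiv:1302.3771 — 2 statements merged into one kernel-verified Lean document; each statement's English description precedes it below -/
import Mathlib

section
/- With the matching constants of the glued solution pair from Lemma 1, the Wronskian of the glued functions is piecewise proportional to the scale density with a single constant: if ψ̃ = ψ_{λ+α} on x ≤ ℓ, ψ̃ = Aψ_λ + Bφ_λ on x > ℓ, and φ̃ = Cψ_{λ+α} + Dφ_{λ+α} on x ≤ ℓ, φ̃ = φ_λ on x > ℓ, with A,B,C,D chosen so that ψ̃, φ̃ are C¹ at ℓ, then W[φ̃, ψ̃](x) = (W[φ_λ, ψ_{λ+α}](ℓ)/𝔰(ℓ)) · 𝔰(x) for all x. -/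
open MeasureTheory intervalIntegral

/-- The Wronskian `W[f,g](x) = f x * g' x - g x * f' x`. -/
noncomputable def Wron (f g : ℝ → ℝ) (x : ℝ) : ℝ := f x * deriv g x - g x * deriv f x

/-- The scale density `𝔰(x) = exp (−∫_{x₀}^x 2 a(z)/b(z)² dz)`. -/
noncomputable def scaleDensity (a b : ℝ → ℝ) (x₀ x : ℝ) : ℝ :=
  Real.exp (-(∫ z in x₀..x, 2 * a z / (b z) ^ 2))

/-!
Away from `ℓ` each glued function is, near `x`, a fixed linear combination of one fundamental
pair, so by bilinearity its Wronskian is a constant multiple of `W[φ_γ, ψ_γ] = 𝒲_γ 𝔰`; the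
matching constants `A` and `D` are exactly the ones turning that multiple into
`W[φ_λ, ψ_{λ+α}](ℓ)/𝔰(ℓ)`. At `ℓ` itself the Cramer coefficients make both gluings C¹, so the
Wronskian there is `W[φ_λ, ψ_{λ+α}](ℓ)`.
-/

section Wronskian

variable {f g u v : ℝ → ℝ} {x : ℝ}

theorem wron_self (f : ℝ → ℝ) (x : ℝ) : Wron f f x = 0 := by
  unfold Wron; ring

theorem wron_congr {f' g' : ℝ → ℝ} (hf : f =ᶠ[nhds x] f') (hg : g =ᶠ[nhds x] g') :
    Wron f g x = Wron f' g' x := by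
  simp only [Wron, hf.eq_of_nhds, hg.eq_of_nhds, hf.deriv_eq, hg.deriv_eq]

theorem hasDerivAt_linComb (c d : ℝ) (hu : DifferentiableAt ℝ u x)
    (hv : DifferentiableAt ℝ v x) :
    HasDerivAt (fun y => c * u y + d * v y) (c * deriv u x + d * deriv v x) x :=
  (hu.hasDerivAt.const_mul c).fun_add (hv.hasDerivAt.const_mul d)

theorem wron_linComb_left (c d : ℝ) (hu : DifferentiableAt ℝ u x)
    (hv : DifferentiableAt ℝ v x) :
    Wron (fun y => c * u y + d * v y) g x = c * Wron u g x + d * Wron v g x := by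
  simp only [Wron, (hasDerivAt_linComb c d hu hv).deriv]
  ring

theorem wron_linComb_right (c d : ℝ) (hu : DifferentiableAt ℝ u x)
    (hv : DifferentiableAt ℝ v x) :
    Wron f (fun y => c * u y + d * v y) x = c * Wron f u x + d * Wron f v x := by
  simp only [Wron, (hasDerivAt_linComb c d hu hv).deriv]
  ring

/-- Cramer's rule for the system `(u, v; u', v') (c, d)ᵀ = (f, f')ᵀ` at `x`. -/
theorem wron_cramer_apply (hW : Wron v u x ≠ 0) :
    Wron v f x / Wron v u x * u x + Wron f u x / Wron v u x * v x = f x := by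
  field_simp
  unfold Wron
  ring

theorem hasDerivAt_wron_cramer (hu : DifferentiableAt ℝ u x) (hv : DifferentiableAt ℝ v x)
    (hW : Wron v u x ≠ 0) :
    HasDerivAt (fun y => Wron v f x / Wron v u x * u y + Wron f u x / Wron v u x * v y)
      (deriv f x) x := by
  convert hasDerivAt_linComb _ _ hu hv using 1
  field_simp
  unfold Wron
  ring

end Wronskian

section Gluing

variable {f₁ f₂ g₁ g₂ : ℝ → ℝ} {ℓ x : ℝ}

theorem hasDerivAt_glue {d : ℝ} (hf₁ : HasDerivAt f₁ d ℓ) (hf₂ : HasDerivAt f₂ d ℓ)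
    (hval : f₁ ℓ = f₂ ℓ) :
    HasDerivAt (fun y => if y ≤ ℓ then f₁ y else f₂ y) d ℓ := by
  have hleft : HasDerivWithinAt (fun y => if y ≤ ℓ then f₁ y else f₂ y) d (Set.Iic ℓ) ℓ :=
    hf₁.hasDerivWithinAt.congr (fun y hy => if_pos hy) (if_pos le_rfl)
  have hright : HasDerivWithinAt (fun y => if y ≤ ℓ then f₁ y else f₂ y) d (Set.Ici ℓ) ℓ := by
    refine hf₂.hasDerivWithinAt.congr (fun y hy => ?_) (by simp [hval])
    rcases (Set.mem_Ici.mp hy).lt_or_eq with hlt | rfl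
    · exact if_neg (not_le.mpr hlt)
    · simp [hval]
  simpa [Set.Iic_union_Ici] using hleft.union hright

theorem wron_glue_of_lt (hx : x < ℓ) :
    Wron (fun y => if y ≤ ℓ then f₁ y else f₂ y) (fun y => if y ≤ ℓ then g₁ y else g₂ y) x
      = Wron f₁ g₁ x := by
  have hnear : ∀ᶠ y in nhds x, y ≤ ℓ := (eventually_lt_nhds hx).mono fun _ hy => hy.le
  exact wron_congr (hnear.mono fun _ hy => if_pos hy) (hnear.mono fun _ hy => if_pos hy)

theorem wron_glue_of_gt (hx : ℓ < x) :
    Wron (fun y => if y ≤ ℓ then f₁ y else f₂ y) (fun y => if y ≤ ℓ then g₁ y else g₂ y) x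
      = Wron f₂ g₂ x := by
  have hnear : ∀ᶠ y in nhds x, ¬y ≤ ℓ := (eventually_gt_nhds hx).mono fun _ hy => not_le.mpr hy
  exact wron_congr (hnear.mono fun _ hy => if_neg hy) (hnear.mono fun _ hy => if_neg hy)

theorem wron_glue_self (hf₁ : HasDerivAt f₁ (deriv f₂ ℓ) ℓ) (hf₂ : DifferentiableAt ℝ f₂ ℓ)
    (hf : f₁ ℓ = f₂ ℓ) (hg₁ : DifferentiableAt ℝ g₁ ℓ) (hg₂ : HasDerivAt g₂ (deriv g₁ ℓ) ℓ)
    (hg : g₁ ℓ = g₂ ℓ) :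
    Wron (fun y => if y ≤ ℓ then f₁ y else f₂ y) (fun y => if y ≤ ℓ then g₁ y else g₂ y) ℓ
      = Wron f₂ g₁ ℓ := by
  simp only [Wron, (hasDerivAt_glue hf₁ hf₂.hasDerivAt hf).deriv,
    (hasDerivAt_glue hg₁.hasDerivAt hg₂ hg).deriv, le_refl, if_true, hf]

end Gluing

theorem glued_wronskian_eq_general (I : Set ℝ)
    (a b : ℝ → ℝ) (ℓ x₀ : ℝ) (hℓ : ℓ ∈ I)
    (ψl φl ψa φa : ℝ → ℝ)
    -- differentiability of the four fundamental solutions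
    (hψld : ∀ x ∈ I, DifferentiableAt ℝ ψl x)
    (hφld : ∀ x ∈ I, DifferentiableAt ℝ φl x)
    (hψad : ∀ x ∈ I, DifferentiableAt ℝ ψa x)
    (hφad : ∀ x ∈ I, DifferentiableAt ℝ φa x)
    -- `W[φ_γ,ψ_γ](x) = 𝒲_γ 𝔰(x)` with `𝒲_γ ≠ 0` for `γ = λ, λ+α`
    (Wl Wa : ℝ) (hWl : Wl ≠ 0) (hWa : Wa ≠ 0)
    (hsl : ∀ x ∈ I, Wron φl ψl x = Wl * scaleDensity a b x₀ x)
    (hsa : ∀ x ∈ I, Wron φa ψa x = Wa * scaleDensity a b x₀ x) :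
    ∀ x ∈ I,
      Wron
        (fun y => if y ≤ ℓ then
            (Wron φa φl ℓ / Wron φa ψa ℓ) * ψa y + (Wron φl ψa ℓ / Wron φa ψa ℓ) * φa y
          else φl y)
        (fun y => if y ≤ ℓ then ψa y
          else (Wron φl ψa ℓ / Wron φl ψl ℓ) * ψl y
            + (Wron ψa ψl ℓ / Wron φl ψl ℓ) * φl y) x
        = (Wron φl ψa ℓ / scaleDensity a b x₀ ℓ) * scaleDensity a b x₀ x := by
  intro x hx
  have hsℓ : scaleDensity a b x₀ ℓ ≠ 0 := (Real.exp_pos _).ne'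
  have hWaℓ : Wron φa ψa ℓ ≠ 0 := by rw [hsa ℓ hℓ]; exact mul_ne_zero hWa hsℓ
  have hWlℓ : Wron φl ψl ℓ ≠ 0 := by rw [hsl ℓ hℓ]; exact mul_ne_zero hWl hsℓ
  rcases lt_trichotomy x ℓ with hlt | rfl | hgt
  · rw [wron_glue_of_lt hlt, wron_linComb_left _ _ (hψad x hx) (hφad x hx), wron_self, mul_zero,
      zero_add, hsa x hx, hsa ℓ hℓ]
    field_simp
  · rw [wron_glue_self (hasDerivAt_wron_cramer (hψad x hx) (hφad x hx) hWaℓ) (hφld x hx)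
      (wron_cramer_apply hWaℓ) (hψad x hx) (hasDerivAt_wron_cramer (hψld x hx) (hφld x hx) hWlℓ)
      (wron_cramer_apply hWlℓ).symm, div_mul_cancel₀ _ hsℓ]
  · rw [wron_glue_of_gt hgt, wron_linComb_right _ _ (hψld x hx) (hφld x hx), wron_self, mul_zero,
      add_zero, hsl x hx, hsl ℓ hℓ]
    field_simp

/-- The Wronskian of the glued pair `ψ̃, φ̃` of Lemma 1 (glued across the
level `ℓ` with the C¹ matching constants `A, B, C, D`) equals
`(W[φ_λ, ψ_{λ+α}](ℓ)/𝔰(ℓ)) 𝔰(x)` for all `x`. -/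
theorem glued_wronskian_eq (I : Set ℝ) (hI : IsOpen I) (hconv : Convex ℝ I)
    (a b : ℝ → ℝ) (ha : ContinuousOn a I) (hbcont : ContinuousOn b I)
    (hb : ∀ x ∈ I, 0 < b x) (lam α ℓ x₀ : ℝ) (hℓ : ℓ ∈ I) (hx₀ : x₀ ∈ I)
    (ψl φl ψa φa : ℝ → ℝ)
    -- differentiability of the four fundamental solutions
    (hψld : ∀ x ∈ I, DifferentiableAt ℝ ψl x)
    (hψld2 : ∀ x ∈ I, DifferentiableAt ℝ (deriv ψl) x)
    (hφld : ∀ x ∈ I, DifferentiableAt ℝ φl x)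
    (hφld2 : ∀ x ∈ I, DifferentiableAt ℝ (deriv φl) x)
    (hψad : ∀ x ∈ I, DifferentiableAt ℝ ψa x)
    (hψad2 : ∀ x ∈ I, DifferentiableAt ℝ (deriv ψa) x)
    (hφad : ∀ x ∈ I, DifferentiableAt ℝ φa x)
    (hφad2 : ∀ x ∈ I, DifferentiableAt ℝ (deriv φa) x)
    -- `ψ_λ, φ_λ` solve the ODE with eigenvalue `λ`,
    -- `ψ_{λ+α}, φ_{λ+α}` solve it with eigenvalue `λ + α`
    (hψl : ∀ x ∈ I, (1/2) * (b x) ^ 2 * deriv (deriv ψl) x + a x * deriv ψl x = lam * ψl x)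
    (hφl : ∀ x ∈ I, (1/2) * (b x) ^ 2 * deriv (deriv φl) x + a x * deriv φl x = lam * φl x)
    (hψa : ∀ x ∈ I, (1/2) * (b x) ^ 2 * deriv (deriv ψa) x + a x * deriv ψa x
      = (lam + α) * ψa x)
    (hφa : ∀ x ∈ I, (1/2) * (b x) ^ 2 * deriv (deriv φa) x + a x * deriv φa x
      = (lam + α) * φa x)
    -- `W[φ_γ,ψ_γ](x) = 𝒲_γ 𝔰(x)` with `𝒲_γ ≠ 0` for `γ = λ, λ+α`
    (Wl Wa : ℝ) (hWl : Wl ≠ 0) (hWa : Wa ≠ 0)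
    (hsl : ∀ x ∈ I, Wron φl ψl x = Wl * scaleDensity a b x₀ x)
    (hsa : ∀ x ∈ I, Wron φa ψa x = Wa * scaleDensity a b x₀ x) :
    ∀ x ∈ I,
      Wron
        (fun y => if y ≤ ℓ then
            (Wron φa φl ℓ / Wron φa ψa ℓ) * ψa y + (Wron φl ψa ℓ / Wron φa ψa ℓ) * φa y
          else φl y)
        (fun y => if y ≤ ℓ then ψa y
          else (Wron φl ψa ℓ / Wron φl ψl ℓ) * ψl y
            + (Wron ψa ψl ℓ / Wron φl ψl ℓ) * φl y) x
        = (Wron φl ψa ℓ / scaleDensity a b x₀ ℓ) * scaleDensity a b x₀ x :=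
  glued_wronskian_eq_general I a b ℓ x₀ hℓ ψl φl ψa φa hψld hφld hψad hφad Wl Wa hWl hWa hsl hsa
end

section
/- The function u(x) = x^{−μ/2} K_μ(2√(2ρx)/ν) satisfies the squared Bessel eigenvalue equation (1/2)ν²x u''(x) + γ₀ u'(x) = ρ u(x) for x > 0, where μ = 2γ₀/ν² − 1. -/
/-!
With `c = 2√(2ρ)/ν`, the function `w(y) = K(c√y)` satisfies the Euler-type equation
`y² w'' + y w' = (c²y/4 + (μ/2)²) w`, obtained from the modified Bessel equation by the
substitution `z = c√y`. The gauge factor `y^p` with `p = -μ/2` cancels the `(μ/2)²` term: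
`u = y^p w` satisfies `y u'' + (1 - 2p) u' = (c²/4) u`, which is the claimed equation
multiplied by `2/ν²`, since `1 - 2p = 2γ₀/ν²` and `c²/4 = 2ρ/ν²`.
-/

open Filter Topology

theorem hasDerivAt_deriv_of_eventually_hasDerivAt {f f' : ℝ → ℝ} {x f'' : ℝ}
    (h : ∀ᶠ t in 𝓝 x, HasDerivAt f (f' t) t) (h' : HasDerivAt f' f'' x) :
    HasDerivAt (deriv f) f'' x :=
  h'.congr_of_eventuallyEq (h.mono fun _ ht => ht.deriv)

theorem hasDerivAt_comp_mul_sqrt (f : ℝ → ℝ) {c y : ℝ} (hy : 0 < y)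
    (hf : DifferentiableAt ℝ f (c * √y)) :
    HasDerivAt (fun t => f (c * √t)) (deriv f (c * √y) * (c / (2 * √y))) y := by
  refine (hf.hasDerivAt.comp y ((Real.hasDerivAt_sqrt hy.ne').const_mul c)).congr_deriv ?_
  field_simp

theorem hasDerivAt_deriv_comp_mul_sqrt (f : ℝ → ℝ) {c y : ℝ} (hc : 0 < c) (hy : 0 < y)
    (hf : ∀ z > 0, DifferentiableAt ℝ f z) (hf' : DifferentiableAt ℝ (deriv f) (c * √y)) :
    HasDerivAt (deriv fun t => f (c * √t))
      (deriv (deriv f) (c * √y) * (c / (2 * √y)) ^ 2 - deriv f (c * √y) * (c / (4 * y * √y)))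
      y := by
  have hsqrt : 0 < √y := Real.sqrt_pos.mpr hy
  have hfactor : HasDerivAt (fun t => c / (2 * √t)) (-(c / (4 * y * √y))) y := by
    refine ((hasDerivAt_const y c).div ((Real.hasDerivAt_sqrt hy.ne').const_mul 2)
      (by positivity)).congr_deriv ?_
    field_simp
    rw [Real.sq_sqrt hy.le]
    ring
  refine hasDerivAt_deriv_of_eventually_hasDerivAt ?_
    (((hasDerivAt_comp_mul_sqrt (deriv f) hy hf').mul hfactor).congr_deriv (by ring))
  filter_upwards [Ioi_mem_nhds hy] with t ht
  exact hasDerivAt_comp_mul_sqrt f ht (hf _ (mul_pos hc (Real.sqrt_pos.mpr ht)))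

theorem ode_comp_mul_sqrt_of_modifiedBessel (f : ℝ → ℝ) {c μ y : ℝ} (hc : 0 < c) (hy : 0 < y)
    (hf : ∀ z > 0, DifferentiableAt ℝ f z) (hf' : DifferentiableAt ℝ (deriv f) (c * √y))
    (hbessel : (c * √y) ^ 2 * deriv (deriv f) (c * √y) + c * √y * deriv f (c * √y)
      - ((c * √y) ^ 2 + μ ^ 2) * f (c * √y) = 0) :
    y ^ 2 * deriv (deriv fun t => f (c * √t)) y + y * deriv (fun t => f (c * √t)) y
      = (c ^ 2 / 4 * y + (μ / 2) ^ 2) * f (c * √y) := by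
  have hsqrt : 0 < √y := Real.sqrt_pos.mpr hy
  rw [(hasDerivAt_deriv_comp_mul_sqrt f hc hy hf hf').deriv,
    (hasDerivAt_comp_mul_sqrt f hy (hf _ (by positivity))).deriv]
  field_simp
  rw [mul_pow, Real.sq_sqrt hy.le] at hbessel
  rw [Real.sq_sqrt hy.le]
  linear_combination (4 * y) * hbessel

theorem ode_rpow_mul_of_ode {w : ℝ → ℝ} {p a x : ℝ} (hx : 0 < x)
    (hw : ∀ᶠ y in 𝓝 x, DifferentiableAt ℝ w y) (hw' : DifferentiableAt ℝ (deriv w) x)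
    (hode : x ^ 2 * deriv (deriv w) x + x * deriv w x = (a * x + p ^ 2) * w x) :
    x * deriv (deriv fun y => y ^ p * w y) x + (1 - 2 * p) * deriv (fun y => y ^ p * w y) x
      = a * (x ^ p * w x) := by
  have hpow (q : ℝ) {y : ℝ} (hy : 0 < y) : HasDerivAt (fun t => t ^ q) (q * y ^ (q - 1)) y :=
    Real.hasDerivAt_rpow_const (Or.inl hy.ne')
  have hu : ∀ᶠ y in 𝓝 x, HasDerivAt (fun t => t ^ p * w t)
      (p * y ^ (p - 1) * w y + y ^ p * deriv w y) y := by
    filter_upwards [Ioi_mem_nhds hx, hw] with y hy hwy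
    exact (hpow p hy).mul hwy.hasDerivAt
  have hu' := hasDerivAt_deriv_of_eventually_hasDerivAt hu
    ((((hpow (p - 1) hx).const_mul p).mul hw.self_of_nhds.hasDerivAt).add
      ((hpow p hx).mul hw'.hasDerivAt))
  rw [hu'.deriv, hu.self_of_nhds.deriv]
  simp only [Real.rpow_sub_one hx.ne']
  field_simp
  linear_combination hode

theorem besselK_eigenfunction_general (ν ρ γ₀ μ : ℝ) (hν : 0 < ν) (hρ : 0 < ρ)
    (hμ : μ = 2 * γ₀ / ν ^ 2 - 1) (K : ℝ → ℝ)
    (hK1 : ∀ z > (0:ℝ), DifferentiableAt ℝ K z)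
    (hK2 : ∀ z > (0:ℝ), DifferentiableAt ℝ (deriv K) z)
    (hK : ∀ z > (0:ℝ),
      z ^ 2 * deriv (deriv K) z + z * deriv K z - (z ^ 2 + μ ^ 2) * K z = 0) :
    ∀ x > (0:ℝ),
      (1/2) * ν ^ 2 * x *
          deriv (deriv (fun y : ℝ => y ^ (-μ/2 : ℝ) * K (2 * Real.sqrt (2 * ρ * y) / ν))) x
        + γ₀ * deriv (fun y : ℝ => y ^ (-μ/2 : ℝ) * K (2 * Real.sqrt (2 * ρ * y) / ν)) x
      = ρ * (x ^ (-μ/2 : ℝ) * K (2 * Real.sqrt (2 * ρ * x) / ν)) := by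
  intro x hx
  set c := 2 * √(2 * ρ) / ν with hc_def
  have hc : 0 < c := by positivity
  have hc_sq : ν ^ 2 * c ^ 2 = 8 * ρ := by
    rw [hc_def, div_pow, mul_pow, Real.sq_sqrt (by positivity)]
    field_simp
    ring
  have hγ₀ : γ₀ = (1 + μ) * ν ^ 2 / 2 := by
    rw [hμ]
    field_simp
    ring
  have hsubst (y : ℝ) : 2 * √(2 * ρ * y) / ν = c * √y := by
    rw [Real.sqrt_mul (by positivity)]
    ring
  simp only [hsubst]
  have hK2x : DifferentiableAt ℝ (deriv K) (c * √x) := hK2 _ (by positivity)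
  have hw : ∀ᶠ y in 𝓝 x, DifferentiableAt ℝ (fun t => K (c * √t)) y := by
    filter_upwards [Ioi_mem_nhds hx] with y hy
    exact (hasDerivAt_comp_mul_sqrt K hy
      (hK1 _ (mul_pos hc (Real.sqrt_pos.mpr hy)))).differentiableAt
  have hw' := (hasDerivAt_deriv_comp_mul_sqrt K hc hx hK1 hK2x).differentiableAt
  have hbessel := ode_comp_mul_sqrt_of_modifiedBessel K hc hx hK1 hK2x
    (hK _ (by positivity))
  have hode := ode_rpow_mul_of_ode (p := -μ / 2) (a := c ^ 2 / 4) hx hw hw'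
    (by linear_combination hbessel)
  rw [hγ₀]
  linear_combination ν ^ 2 / 2 * hode + (x ^ (-μ / 2) * K (c * √x)) / 8 * hc_sq

/-- If `K = K_μ` satisfies the modified Bessel equation
`z² K'' + z K' − (z² + μ²) K = 0` on `(0,∞)`, then
`u(x) = x^(−μ/2) K(2√(2ρx)/ν)` satisfies the squared Bessel eigenvalue equation
`(1/2) ν² x u'' + γ₀ u' = ρ u` for `x > 0`, where `μ = 2γ₀/ν² − 1`. -/
theorem besselK_eigenfunction (ν ρ γ₀ μ : ℝ) (hν : 0 < ν) (hρ : 0 < ρ) (hγ : 0 < γ₀)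
    (hμ : μ = 2 * γ₀ / ν ^ 2 - 1) (K : ℝ → ℝ)
    (hK1 : ∀ z > (0:ℝ), DifferentiableAt ℝ K z)
    (hK2 : ∀ z > (0:ℝ), DifferentiableAt ℝ (deriv K) z)
    (hK : ∀ z > (0:ℝ),
      z ^ 2 * deriv (deriv K) z + z * deriv K z - (z ^ 2 + μ ^ 2) * K z = 0) :
    ∀ x > (0:ℝ),
      (1/2) * ν ^ 2 * x *
          deriv (deriv (fun y : ℝ => y ^ (-μ/2 : ℝ) * K (2 * Real.sqrt (2 * ρ * y) / ν))) x
        + γ₀ * deriv (fun y : ℝ => y ^ (-μ/2 : ℝ) * K (2 * Real.sqrt (2 * ρ * y) / ν)) x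
      = ρ * (x ^ (-μ/2 : ℝ) * K (2 * Real.sqrt (2 * ρ * x) / ν)) :=
  besselK_eigenfunction_general ν ρ γ₀ μ hν hρ hμ K hK1 hK2 hK
end
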